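/- Consider a two-link parallel network with capacities 0 ≤ c_1 ≤ c_2, and suppose r, r^a satisfy c_1 ≤ r^a ≤ c_2, r − c_2 ≤ r^a, and c_2 ≤ r + r^a ≤ 2 c_1 + c_2. Then B^SE(r, r^a) = (r + r^a − c_2)/2, and for every f ∈ F(c,r), B*(f, r^a) − B^SE(r, r^a) = | f_1 − (r + r^a − c_2)/2 |. -/

import Mathlib

open Finset

noncomputable section

/-- Set of feasible profiles routing `r` units of traffic with per-edge capacities `c`. -/
def Feas {E : Type*} [Fintype E] (c : E → ℝ) (r : ℝ) : Set (E → ℝ) :=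
  {f | ∑ e, f e = r ∧ ∀ e, 0 ≤ f e ∧ f e ≤ c e}

/-- Total blocked traffic. -/
def Blocked {E : Type*} [Fintype E] (c f fa : E → ℝ) : ℝ :=
  ∑ e, max (f e + fa e - c e) 0

/-- Best-response value of the attacker against routing `f` with budget `ra`. -/
def Bstar {E : Type*} [Fintype E] (c : E → ℝ) (f : E → ℝ) (ra : ℝ) : ℝ :=
  sSup ((fun fa => Blocked c f fa) '' Feas c ra)

/-- Stackelberg value. -/
def BSE {E : Type*} [Fintype E] (c : E → ℝ) (r ra : ℝ) : ℝ :=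
  sInf ((fun f => Bstar c f ra) '' Feas c r)

/-- max over nonempty E' ⊆ E of (C(E') - r)/|E'|. -/
def gval {E : Type*} [Fintype E] [Nonempty E] (c : E → ℝ) (r : ℝ) : ℝ :=
  (univ.powerset.filter fun s : Finset E => s.Nonempty).sup'
    ⟨univ, by simp [Finset.univ_nonempty]⟩
    (fun s => ((∑ e ∈ s, c e) - r) / s.card)

/-- max over nonempty E' ⊆ E of (r - C(E \ E'))/|E'|. -/
def hval {E : Type*} [Fintype E] [Nonempty E] [DecidableEq E] (c : E → ℝ) (r : ℝ) : ℝ :=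
  (univ.powerset.filter fun s : Finset E => s.Nonempty).sup'
    ⟨univ, by simp [Finset.univ_nonempty]⟩
    (fun s => (r - ∑ e ∈ univ \ s, c e) / s.card)

/-- `fa` is a best-response attack to `f`. -/
def IsBestResponse {E : Type*} [Fintype E] (c : E → ℝ) (ra : ℝ) (f fa : E → ℝ) : Prop :=
  fa ∈ Feas c ra ∧ ∀ fa' ∈ Feas c ra, Blocked c f fa' ≤ Blocked c f fa

/-- Nash equilibrium. -/
def IsNash {E : Type*} [Fintype E] (c : E → ℝ) (r ra : ℝ) (f fa : E → ℝ) : Prop :=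
  f ∈ Feas c r ∧ fa ∈ Feas c ra ∧
    (∀ f' ∈ Feas c r, Blocked c f fa ≤ Blocked c f' fa) ∧
    (∀ fa' ∈ Feas c ra, Blocked c f fa' ≤ Blocked c f fa)

/-- Stackelberg equilibrium. -/
def IsStackelberg {E : Type*} [Fintype E] (c : E → ℝ) (r ra : ℝ) (f fa : E → ℝ) : Prop :=
  f ∈ Feas c r ∧ fa ∈ Feas c ra ∧
    (∀ f' ∈ Feas c r, Bstar c f ra ≤ Bstar c f' ra) ∧
    (∀ fa' ∈ Feas c ra, Blocked c f fa' ≤ Blocked c f fa)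

/-!
Against a routing `f`, the attacker either fills link 1 (blocking `f₁`) or pours everything
into link 2 (blocking `r + rᵃ - c₂ - f₁`); every other attack is dominated by one of these, so
`B*(f, rᵃ) = max f₁ (M - f₁)` with `M = r + rᵃ - c₂`. The defender minimises this at
`f₁ = M / 2`, which the hypotheses make feasible, and
`max x (M - x) - M / 2 = |x - M / 2|`.
-/

theorem max_sub_half_eq_abs (x a : ℝ) : max x (a - x) - a / 2 = |x - a / 2| := by
  rw [← max_sub_sub_right, abs_eq_max_neg]
  congr 1
  ring

theorem max_zero_add_max_zero_le {α : Type*} [AddCommGroup α] [LinearOrder α]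
    [IsOrderedAddMonoid α] {x y m : α} (hxy : x + y ≤ m) (hx : x ≤ m) (hy : y ≤ m)
    (hm : 0 ≤ m) : max x 0 + max y 0 ≤ m := by
  rcases max_cases x 0 with ⟨hx', -⟩ | ⟨hx', -⟩ <;>
    rcases max_cases y 0 with ⟨hy', -⟩ | ⟨hy', -⟩ <;>
    simpa [hx', hy']

section TwoLink

variable {c f fa : Fin 2 → ℝ} {r ra : ℝ}

theorem mem_feas_two_iff :
    f ∈ Feas c r ↔ f 0 + f 1 = r ∧ (0 ≤ f 0 ∧ f 0 ≤ c 0) ∧ (0 ≤ f 1 ∧ f 1 ≤ c 1) := by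
  simp [Feas, Fin.sum_univ_two, Fin.forall_fin_two]

theorem blocked_two :
    Blocked c f fa = max (f 0 + fa 0 - c 0) 0 + max (f 1 + fa 1 - c 1) 0 := by
  simp [Blocked, Fin.sum_univ_two]

theorem blocked_le_two (hf : f ∈ Feas c r) (hfa : fa ∈ Feas c ra) :
    Blocked c f fa ≤ max (f 0) (r + ra - c 1 - f 0) := by
  obtain ⟨hfs, ⟨hf0, hf0c⟩, -⟩ := mem_feas_two_iff.1 hf
  obtain ⟨hfas, ⟨hfa0, hfa0c⟩, -⟩ := mem_feas_two_iff.1 hfa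
  rw [blocked_two]
  apply max_zero_add_max_zero_le
  · exact le_max_of_le_right (by linarith)
  · exact le_max_of_le_left (by linarith)
  · exact le_max_of_le_right (by linarith)
  · exact le_max_of_le_left hf0

theorem bstar_two (hc0 : 0 ≤ c 0) (hra1 : c 0 ≤ ra) (hra2 : ra ≤ c 1) (hf : f ∈ Feas c r) :
    Bstar c f ra = max (f 0) (r + ra - c 1 - f 0) := by
  have hfs := (mem_feas_two_iff.1 hf).1
  have hub : ∀ fa ∈ Feas c ra, Blocked c f fa ≤ max (f 0) (r + ra - c 1 - f 0) :=
    fun _ => blocked_le_two hf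
  have hle : ∀ fa ∈ Feas c ra, Blocked c f fa ≤ Bstar c f ra := fun fa hfa =>
    le_csSup ⟨_, Set.forall_mem_image.2 hub⟩ (Set.mem_image_of_mem _ hfa)
  have hfill : ![c 0, ra - c 0] ∈ Feas c ra := by
    rw [mem_feas_two_iff]
    simp only [Matrix.cons_val_zero, Matrix.cons_val_one]
    refine ⟨by ring, ⟨hc0, le_rfl⟩, ⟨by linarith, by linarith⟩⟩
  have hpour : ![0, ra] ∈ Feas c ra := by
    rw [mem_feas_two_iff]
    simp only [Matrix.cons_val_zero, Matrix.cons_val_one]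
    refine ⟨by ring, ⟨le_rfl, hc0⟩, ⟨by linarith, hra2⟩⟩
  refine le_antisymm (csSup_le ⟨_, _, hfill, rfl⟩ (Set.forall_mem_image.2 hub)) (max_le ?_ ?_)
  · calc f 0 = (f 0 + c 0 - c 0) + 0 := by ring
      _ ≤ Blocked c f ![c 0, ra - c 0] := by
        rw [blocked_two]
        exact add_le_add (le_max_left _ _) (le_max_right _ _)
      _ ≤ Bstar c f ra := hle _ hfill
  · calc r + ra - c 1 - f 0 = 0 + (f 1 + ra - c 1) := by linarith
      _ ≤ Blocked c f ![0, ra] := by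
        rw [blocked_two]
        exact add_le_add (le_max_right _ _) (le_max_left _ _)
      _ ≤ Bstar c f ra := hle _ hpour

end TwoLink

theorem stmt7_general (c₁ c₂ r ra : ℝ) (hc0 : 0 ≤ c₁)
    (hra1 : c₁ ≤ ra) (hra2 : ra ≤ c₂) (hr1 : r - c₂ ≤ ra)
    (hsum1 : c₂ ≤ r + ra) (hsum2 : r + ra ≤ 2 * c₁ + c₂) :
    BSE ![c₁, c₂] r ra = (r + ra - c₂) / 2 ∧
      ∀ f ∈ Feas ![c₁, c₂] r,
        Bstar ![c₁, c₂] f ra - BSE ![c₁, c₂] r ra = |f 0 - (r + ra - c₂) / 2| := by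
  set M := r + ra - c₂
  have hbstar : ∀ f ∈ Feas ![c₁, c₂] r, Bstar ![c₁, c₂] f ra = max (f 0) (M - f 0) :=
    fun f hf => bstar_two hc0 hra1 hra2 hf
  have hopt : ![M / 2, r - M / 2] ∈ Feas ![c₁, c₂] r := by
    rw [mem_feas_two_iff]
    simp only [Matrix.cons_val_zero, Matrix.cons_val_one]
    refine ⟨by ring, ⟨by linarith, by linarith⟩, ⟨by linarith, by linarith⟩⟩
  have hBSE : BSE ![c₁, c₂] r ra = M / 2 := by
    refine IsLeast.csInf_eq ⟨⟨_, hopt, ?_⟩, Set.forall_mem_image.2 fun f hf => ?_⟩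
    · simp [hbstar _ hopt]
    · have := max_sub_half_eq_abs (f 0) M
      rw [hbstar f hf]
      linarith [abs_nonneg (f 0 - M / 2)]
  exact ⟨hBSE, fun f hf => by rw [hBSE, hbstar f hf, max_sub_half_eq_abs]⟩

/-- In a two-link network with `c₁ ≤ ra ≤ c₂`, `r - c₂ ≤ ra` and
`c₂ ≤ r + ra ≤ 2c₁ + c₂`, the Stackelberg value is `(r + ra - c₂)/2` and the regret of any
routing `f` is `|f₁ - (r + ra - c₂)/2|`. -/
theorem stmt7 (c₁ c₂ r ra : ℝ) (hc0 : 0 ≤ c₁) (hc : c₁ ≤ c₂)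
    (hra1 : c₁ ≤ ra) (hra2 : ra ≤ c₂) (hr1 : r - c₂ ≤ ra)
    (hsum1 : c₂ ≤ r + ra) (hsum2 : r + ra ≤ 2 * c₁ + c₂) :
    BSE ![c₁, c₂] r ra = (r + ra - c₂) / 2 ∧
      ∀ f ∈ Feas ![c₁, c₂] r,
        Bstar ![c₁, c₂] f ra - BSE ![c₁, c₂] r ra = |f 0 - (r + ra - c₂) / 2| :=
  stmt7_general c₁ c₂ r ra hc0 hra1 hra2 hr1 hsum1 hsum2
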